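/- arXiv:1908.03268 — 2 statements merged into one kernel-verified Lean document; each statement's English description precedes it below -/
import Mathlib

section
/- (Pettis's theorem for groupoids) Let G be a topological groupoid such that every fiber σ⁻¹(x) and τ⁻¹(x), x ∈ G⁰, is a Baire space. Let A, B, U, V ⊆ G with U τ-fiberwise open (U ∩ τ⁻¹(x) is open in τ⁻¹(x) for every x), V σ-fiberwise open, U∖A τ-fiberwise meager (meager in each τ⁻¹(x)), and V∖B σ-fiberwise meager. Then U·V ⊆ A·B, where for subsets S, T ⊆ G, S·T denotes the set of all products g·h with g ∈ S, h ∈ T composable. -/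
open Set Topology

attribute [local instance] Classical.propDecidable

/-- A small groupoid, presented on its space of morphisms `G`, with objects
identified with unit morphisms.  `comp g h` is only meaningful when
`src g = tgt h`; its values elsewhere are irrelevant junk. -/
structure Groupoidal (G : Type*) where
  src : G → G
  tgt : G → G
  comp : G → G → G
  inv : G → G
  src_src : ∀ g, src (src g) = src g
  tgt_of_src : ∀ g, tgt (src g) = src g
  src_of_tgt : ∀ g, src (tgt g) = tgt g
  tgt_tgt : ∀ g, tgt (tgt g) = tgt g
  comp_src : ∀ g, comp g (src g) = g
  tgt_comp_self : ∀ g, comp (tgt g) g = g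
  src_comp : ∀ g h, src g = tgt h → src (comp g h) = src h
  tgt_comp : ∀ g h, src g = tgt h → tgt (comp g h) = tgt g
  comp_assoc : ∀ g h k, src g = tgt h → src h = tgt k →
    comp (comp g h) k = comp g (comp h k)
  src_inv : ∀ g, src (inv g) = tgt g
  tgt_inv : ∀ g, tgt (inv g) = src g
  comp_inv_self : ∀ g, comp g (inv g) = tgt g
  inv_comp_self : ∀ g, comp (inv g) g = src g

namespace Groupoidal

variable {G : Type*} (S : Groupoidal G)

/-- The set of objects (= unit morphisms) of the groupoid. -/
def units : Set G := {x | S.src x = x}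

/-- Two morphisms are composable when the source of the first matches the
target of the second. -/
def Composable (g h : G) : Prop := S.src g = S.tgt h

/-- Pointwise product of two subsets of a groupoid. -/
def setMul (A B : Set G) : Set G :=
  {k | ∃ g ∈ A, ∃ h ∈ B, S.Composable g h ∧ k = S.comp g h}

/-- Pointwise inverse of a subset of a groupoid. -/
def setInv (A : Set G) : Set G := S.inv '' A

def IsSymmetric (A : Set G) : Prop := S.setInv A = A

def IsUnital (A : Set G) : Prop := S.src '' A ⊆ A ∧ S.tgt '' A ⊆ A

/-- A subgroupoid: a subset closed under inverse and multiplication. -/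
def IsSubgroupoid (A : Set G) : Prop := S.IsSymmetric A ∧ S.setMul A A ⊆ A

/-- A topological groupoid: all structure maps are continuous (multiplication
on the subspace of composable pairs). -/
structure IsTopological [TopologicalSpace G] : Prop where
  continuous_src : Continuous S.src
  continuous_tgt : Continuous S.tgt
  continuous_inv : Continuous S.inv
  continuous_comp :
    Continuous fun p : {p : G × G // S.Composable p.1 p.2} => S.comp p.1.1 p.1.2

/-- An open topological groupoid: the source map is open. -/
def IsOpenGroupoid [TopologicalSpace G] : Prop := IsOpenMap S.src

/-- A non-Archimedean topological groupoid: every unit morphism has a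
neighborhood basis of open subgroupoids. -/
def IsNonArchimedean [TopologicalSpace G] : Prop :=
  ∀ x ∈ S.units, ∀ W ∈ nhds x, ∃ U : Set G,
    IsOpen U ∧ x ∈ U ∧ U ⊆ W ∧ S.IsSubgroupoid U

/-- A standard Borel groupoid structure: all structure maps are Borel. -/
structure IsBorelGroupoid [MeasurableSpace G] : Prop where
  measurable_src : Measurable S.src
  measurable_tgt : Measurable S.tgt
  measurable_inv : Measurable S.inv
  measurable_comp :
    Measurable fun p : {p : G × G // S.Composable p.1 p.2} => S.comp p.1.1 p.1.2

end Groupoidal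

/-- A `Π⁰₂` subset of a topological space: a countable intersection of sets
of the form (closed ∪ open). -/
def IsPi02 {X : Type*} [TopologicalSpace X] (A : Set X) : Prop :=
  ∃ C O : ℕ → Set X, (∀ n, IsClosed (C n)) ∧ (∀ n, IsOpen (O n)) ∧
    A = ⋂ n, C n ∪ O n

/-- A quasi-Polish space: homeomorphic to a `Π⁰₂` subspace of `𝕊^ℕ`, where
`𝕊 = Prop` is the Sierpiński space. -/
def IsQuasiPolish (X : Type*) [TopologicalSpace X] : Prop :=
  ∃ A : Set (ℕ → Prop), IsPi02 A ∧ Nonempty (X ≃ₜ ↥A)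

/-- A σ-locally Polish space: a countable cover by open Polish subspaces. -/
def IsSigmaLocallyPolish (X : Type*) [TopologicalSpace X] : Prop :=
  ∃ V : ℕ → Set X, (∀ n, IsOpen (V n)) ∧ (∀ n, PolishSpace (V n)) ∧
    (⋃ n, V n) = Set.univ

/-- A functor between groupoids presented on their spaces of morphisms. -/
structure GFunctor {G H : Type*} (S : Groupoidal G) (T : Groupoidal H) where
  toFun : G → H
  map_src : ∀ g, toFun (S.src g) = T.src (toFun g)
  map_tgt : ∀ g, toFun (S.tgt g) = T.tgt (toFun g)
  map_comp : ∀ g h, S.Composable g h →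
    toFun (S.comp g h) = T.comp (toFun g) (toFun h)

namespace GFunctor

variable {G H K : Type*} {S : Groupoidal G} {T : Groupoidal H} {R : Groupoidal K}

/-- The identity functor. -/
def id (S : Groupoidal G) : GFunctor S S :=
  ⟨fun g => g, fun _ => rfl, fun _ => rfl, fun _ _ _ => rfl⟩

/-- Composition of functors. -/
def comp (F₂ : GFunctor T R) (F₁ : GFunctor S T) : GFunctor S R where
  toFun := F₂.toFun ∘ F₁.toFun
  map_src g := by simp only [Function.comp_apply, F₁.map_src, F₂.map_src]
  map_tgt g := by simp only [Function.comp_apply, F₁.map_tgt, F₂.map_tgt]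
  map_comp g h hc := by
    have hc' : T.Composable (F₁.toFun g) (F₁.toFun h) := by
      unfold Groupoidal.Composable at hc ⊢
      rw [← F₁.map_src, ← F₁.map_tgt, hc]
    simp only [Function.comp_apply, F₁.map_comp g h hc, F₂.map_comp _ _ hc']

/-- A functor is full if it is surjective on each hom-set. -/
def Full (F : GFunctor S T) : Prop :=
  ∀ x ∈ S.units, ∀ y ∈ S.units, ∀ k : H,
    T.src k = F.toFun x → T.tgt k = F.toFun y →
      ∃ g : G, S.src g = x ∧ S.tgt g = y ∧ F.toFun g = k

/-- A functor is faithful if it is injective on each hom-set. -/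
def Faithful (F : GFunctor S T) : Prop :=
  ∀ g g' : G, S.src g = S.src g' → S.tgt g = S.tgt g' →
    F.toFun g = F.toFun g' → g = g'

end GFunctor

/-- A natural transformation (automatically an isomorphism, between functors
of groupoids); `app` is only meaningful on unit morphisms. -/
structure GNatIso {G H : Type*} {S : Groupoidal G} {T : Groupoidal H}
    (F F' : GFunctor S T) where
  app : G → H
  app_src : ∀ x ∈ S.units, T.src (app x) = F.toFun x
  app_tgt : ∀ x ∈ S.units, T.tgt (app x) = F'.toFun x
  naturality : ∀ g : G,
    T.comp (app (S.tgt g)) (F.toFun g) = T.comp (F'.toFun g) (app (S.src g))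

/-- A Borel functor which is an equivalence of groupoids witnessed by a Borel
inverse functor and Borel natural isomorphisms. -/
def IsBorelEquivalence {G H : Type*} [MeasurableSpace G] [MeasurableSpace H]
    {S : Groupoidal G} {T : Groupoidal H} (F : GFunctor S T) : Prop :=
  Measurable F.toFun ∧
  ∃ F' : GFunctor T S, Measurable F'.toFun ∧
    (∃ α : GNatIso (F.comp F') (GFunctor.id T), Measurable α.app) ∧
    (∃ β : GNatIso (F'.comp F) (GFunctor.id S), Measurable β.app)

/-
Given composable `g ∈ U`, `h ∈ V` with `x = σ g = τ h`, work in the Baire space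
`τ⁻¹(x)`. The maps `c ↦ g c` onto `τ⁻¹(τ g)` and `c ↦ c⁻¹ h` onto `σ⁻¹(σ h)` are homeomorphisms,
so the pull-backs of `U` and `V` are open sets containing the unit `x`, and the pull-backs of
`U \ A` and `V \ B` are meagre. Their intersection minus the two meagre sets is nonempty, and any
`c` in it factors `g h = (g c) (c⁻¹ h)` with `g c ∈ A` and `c⁻¹ h ∈ B`.
-/

theorem exists_mem_inter_of_isMeagre_diff {X : Type*} [TopologicalSpace X] [BaireSpace X]
    {U₁ U₂ A₁ A₂ : Set X} (hU₁ : IsOpen U₁) (hU₂ : IsOpen U₂) (hne : (U₁ ∩ U₂).Nonempty)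
    (hA₁ : IsMeagre (U₁ \ A₁)) (hA₂ : IsMeagre (U₂ \ A₂)) : (A₁ ∩ A₂).Nonempty := by
  by_contra hempty
  refine not_isMeagre_of_isOpen (hU₁.inter hU₂) hne ((hA₁.union hA₂).mono ?_)
  rintro c ⟨hc₁, hc₂⟩
  by_cases hcA₁ : c ∈ A₁
  · exact Or.inr ⟨hc₂, fun hcA₂ => hempty ⟨c, hcA₁, hcA₂⟩⟩
  · exact Or.inl ⟨hc₁, hcA₁⟩

namespace Groupoidal

variable {G : Type*} (S : Groupoidal G)

theorem tgt_eq_self_of_mem_units {x : G} (hx : x ∈ S.units) : S.tgt x = x := by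
  rw [← hx, S.tgt_of_src, hx]

theorem inv_eq_self_of_mem_units {x : G} (hx : x ∈ S.units) : S.inv x = x := by
  have h := S.tgt_comp_self (S.inv x)
  rw [S.tgt_inv, hx] at h
  rw [← h, S.comp_inv_self, S.tgt_eq_self_of_mem_units hx]

theorem inv_comp_cancel_left {g c : G} (hgc : S.src g = S.tgt c) :
    S.comp (S.inv g) (S.comp g c) = c := by
  rw [← S.comp_assoc _ _ _ (S.src_inv g) hgc, S.inv_comp_self, hgc, S.tgt_comp_self]

theorem comp_inv_cancel_left {g c : G} (hgc : S.tgt g = S.tgt c) :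
    S.comp g (S.comp (S.inv g) c) = c := by
  rw [← S.comp_assoc _ _ _ (S.tgt_inv g).symm (by rw [S.src_inv, hgc]), S.comp_inv_self, hgc,
    S.tgt_comp_self]

theorem comp_inv_cancel_right {c h : G} (hch : S.src c = S.tgt h) :
    S.comp (S.comp c h) (S.inv h) = c := by
  rw [S.comp_assoc _ _ _ hch (S.tgt_inv h).symm, S.comp_inv_self, ← hch, S.comp_src]

theorem inv_comp_cancel_right {c h : G} (hch : S.src c = S.src h) :
    S.comp (S.comp c (S.inv h)) h = c := by
  rw [S.comp_assoc _ _ _ (by rw [S.tgt_inv, hch]) (S.src_inv h), S.inv_comp_self, ← hch,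
    S.comp_src]

theorem inv_inv (g : G) : S.inv (S.inv g) = g := by
  have h := S.inv_comp_cancel_left (S.src_inv g)
  rwa [S.inv_comp_self, ← S.tgt_inv, ← S.src_inv, S.comp_src] at h

theorem comp_mem_setMul_of_comp_mem_of_inv_comp_mem {A B : Set G} {g h c : G}
    (hgc : S.src g = S.tgt c) (hch : S.tgt c = S.tgt h) (hA : S.comp g c ∈ A)
    (hB : S.comp (S.inv c) h ∈ B) : S.comp g h ∈ S.setMul A B := by
  have hc : S.Composable (S.inv c) h := by rw [Composable, S.src_inv, hch]
  refine ⟨_, hA, _, hB, ?_, ?_⟩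
  · rw [Composable, S.src_comp _ _ hgc, S.tgt_comp _ _ hc, S.tgt_inv]
  · rw [S.comp_assoc _ _ _ hgc (by rw [S.tgt_comp _ _ hc, S.tgt_inv]),
      S.comp_inv_cancel_left hch]

variable [TopologicalSpace G] {S}

theorem IsTopological.continuous_comp_of_composable (hTop : S.IsTopological) {α : Type*}
    [TopologicalSpace α] {f₁ f₂ : α → G} (h₁ : Continuous f₁) (h₂ : Continuous f₂)
    (hcomp : ∀ a, S.Composable (f₁ a) (f₂ a)) :
    Continuous fun a => S.comp (f₁ a) (f₂ a) :=
  hTop.continuous_comp.comp ((h₁.prodMk h₂).subtype_mk hcomp)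

def IsTopological.leftCompHomeomorph (hTop : S.IsTopological) {x : G} (g : G)
    (hg : S.src g = x) : ↥(S.tgt ⁻¹' {x}) ≃ₜ ↥(S.tgt ⁻¹' {S.tgt g}) where
  toFun c := ⟨S.comp g c, S.tgt_comp g c (hg.trans c.2.symm)⟩
  invFun d := ⟨S.comp (S.inv g) d, by
    change S.tgt _ = x
    rw [S.tgt_comp _ _ (by rw [S.src_inv]; exact d.2.symm), S.tgt_inv, hg]⟩
  left_inv c := Subtype.ext (S.inv_comp_cancel_left (hg.trans c.2.symm))
  right_inv d := Subtype.ext (S.comp_inv_cancel_left d.2.symm)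
  continuous_toFun := by
    refine Continuous.subtype_mk ?_ _
    exact hTop.continuous_comp_of_composable continuous_const continuous_subtype_val
      fun c => hg.trans c.2.symm
  continuous_invFun := by
    refine Continuous.subtype_mk ?_ _
    exact hTop.continuous_comp_of_composable continuous_const continuous_subtype_val
      fun d => (S.src_inv g).trans d.2.symm

def IsTopological.rightCompHomeomorph (hTop : S.IsTopological) {x : G} (h : G)
    (hh : S.tgt h = x) : ↥(S.src ⁻¹' {x}) ≃ₜ ↥(S.src ⁻¹' {S.src h}) where
  toFun c := ⟨S.comp c h, S.src_comp c h (c.2.trans hh.symm)⟩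
  invFun d := ⟨S.comp d (S.inv h), by
    change S.src _ = x
    rw [S.src_comp _ _ (by rw [S.tgt_inv]; exact d.2), S.src_inv, hh]⟩
  left_inv c := Subtype.ext (S.comp_inv_cancel_right (c.2.trans hh.symm))
  right_inv d := Subtype.ext (S.inv_comp_cancel_right d.2)
  continuous_toFun := by
    refine Continuous.subtype_mk ?_ _
    exact hTop.continuous_comp_of_composable continuous_subtype_val continuous_const
      fun c => c.2.trans hh.symm
  continuous_invFun := by
    refine Continuous.subtype_mk ?_ _
    exact hTop.continuous_comp_of_composable continuous_subtype_val continuous_const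
      fun d => d.2.trans (S.tgt_inv h).symm

def IsTopological.invHomeomorph (hTop : S.IsTopological) : G ≃ₜ G where
  toFun := S.inv
  invFun := S.inv
  left_inv := S.inv_inv
  right_inv := S.inv_inv
  continuous_toFun := hTop.continuous_inv
  continuous_invFun := hTop.continuous_inv

def IsTopological.invFiberHomeomorph (hTop : S.IsTopological) (x : G) :
    ↥(S.tgt ⁻¹' {x}) ≃ₜ ↥(S.src ⁻¹' {x}) :=
  hTop.invHomeomorph.subtype fun c => by
    simp only [mem_preimage, mem_singleton_iff, IsTopological.invHomeomorph,
      Homeomorph.homeomorph_mk_coe, Equiv.coe_fn_mk, S.src_inv]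

end Groupoidal

theorem pettis_for_groupoids_general {G : Type*} [TopologicalSpace G]
    (S : Groupoidal G) (hTop : S.IsTopological)
    (hBaireTgt : ∀ x ∈ S.units, BaireSpace ↥(S.tgt ⁻¹' {x}))
    (A B U V : Set G)
    (hU : ∀ x ∈ S.units,
      IsOpen ((Subtype.val : ↥(S.tgt ⁻¹' {x}) → G) ⁻¹' U))
    (hV : ∀ x ∈ S.units,
      IsOpen ((Subtype.val : ↥(S.src ⁻¹' {x}) → G) ⁻¹' V))
    (hUA : ∀ x ∈ S.units,
      IsMeagre ((Subtype.val : ↥(S.tgt ⁻¹' {x}) → G) ⁻¹' (U \ A)))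
    (hVB : ∀ x ∈ S.units,
      IsMeagre ((Subtype.val : ↥(S.src ⁻¹' {x}) → G) ⁻¹' (V \ B))) :
    S.setMul U V ⊆ S.setMul A B := by
  rintro _ ⟨g, hgU, h, hhV, hgh, rfl⟩
  have hx : S.src g ∈ S.units := S.src_src g
  have := hBaireTgt _ hx
  let φ := hTop.leftCompHomeomorph g rfl
  let ψ := (hTop.invFiberHomeomorph (S.src g)).trans (hTop.rightCompHomeomorph h hgh.symm)
  have hunit : (⟨S.src g, S.tgt_of_src g⟩ : ↥(S.tgt ⁻¹' {S.src g})) ∈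
      φ ⁻¹' (Subtype.val ⁻¹' U) ∩ ψ ⁻¹' (Subtype.val ⁻¹' V) := by
    refine ⟨show S.comp g (S.src g) ∈ U from ?_, show S.comp (S.inv (S.src g)) h ∈ V from ?_⟩
    · rwa [S.comp_src]
    · rwa [S.inv_eq_self_of_mem_units hx, hgh, S.tgt_comp_self]
  obtain ⟨c, hcA, hcB⟩ := exists_mem_inter_of_isMeagre_diff
    ((hU _ (S.src_of_tgt g)).preimage φ.continuous) ((hV _ (S.src_src h)).preimage ψ.continuous)
    ⟨_, hunit⟩ ((hUA _ (S.src_of_tgt g)).preimage_of_isOpenMap φ.continuous φ.isOpenMap)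
    ((hVB _ (S.src_src h)).preimage_of_isOpenMap ψ.continuous ψ.isOpenMap)
  exact S.comp_mem_setMul_of_comp_mem_of_inv_comp_mem c.2.symm (c.2.trans hgh) hcA hcB

/-- **Pettis's theorem for groupoids.**  Let `G` be a topological groupoid all
of whose source and target fibers over objects are Baire spaces.  If `U` is
τ-fiberwise open, `V` is σ-fiberwise open, `U \ A` is τ-fiberwise meager and
`V \ B` is σ-fiberwise meager, then `U · V ⊆ A · B`. -/
theorem pettis_for_groupoids {G : Type*} [TopologicalSpace G]
    (S : Groupoidal G) (hTop : S.IsTopological)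
    (hBaireSrc : ∀ x ∈ S.units, BaireSpace ↥(S.src ⁻¹' {x}))
    (hBaireTgt : ∀ x ∈ S.units, BaireSpace ↥(S.tgt ⁻¹' {x}))
    (A B U V : Set G)
    (hU : ∀ x ∈ S.units,
      IsOpen ((Subtype.val : ↥(S.tgt ⁻¹' {x}) → G) ⁻¹' U))
    (hV : ∀ x ∈ S.units,
      IsOpen ((Subtype.val : ↥(S.src ⁻¹' {x}) → G) ⁻¹' V))
    (hUA : ∀ x ∈ S.units,
      IsMeagre ((Subtype.val : ↥(S.tgt ⁻¹' {x}) → G) ⁻¹' (U \ A)))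
    (hVB : ∀ x ∈ S.units,
      IsMeagre ((Subtype.val : ↥(S.src ⁻¹' {x}) → G) ⁻¹' (V \ B))) :
    S.setMul U V ⊆ S.setMul A B :=
  pettis_for_groupoids_general S hTop hBaireTgt A B U V hU hV hUA hVB
end

section
/- Let X and A be quasi-Polish spaces and p : A → X a continuous map. Then the fiberwise lower powerspace 𝓕_X(A) = {(x,F) : x ∈ X and F is a closed subset of the fiber A_x = p⁻¹(x)}, topologized by the subbasic open sets {(x,F) : x ∈ U} for open U ⊆ X and ◇_X S = {(x,F) : F ∩ S ≠ ∅} for open S ⊆ A, is quasi-Polish. -/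
/-
Choose embeddings `φ : X → 𝕊^ℕ` and `ψ : A → 𝕊^ℕ` with `Π⁰₂` ranges, and encode `(x, F)` by `φ x`
together with the set of finite `t ⊆ ℕ` for which `F` meets `ψ⁻¹[t]`, where `[t]` is the basic open
of `𝕊^ℕ` determined by `t`. Since `F` is closed in its fiber it can be read off its code, and the
subbasic opens of `𝓕_X(A)` are preimages of opens, so this is an embedding into
`𝕊^ℕ × 𝕊^(Finset ℕ) ≃ₜ 𝕊^ℕ`. Its range is cut out by countably many conditions "open ⇒ open",
hence is `Π⁰₂`. That every code satisfying them is attained needs points of the fiber with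
prescribed basic neighbourhoods: they are built as generic limits of finite conditions (Rasiowa–Sikorski), the
countably many requirements coming from the `Π⁰₂` presentation of `ψ(A)` and from the continuity
of `p`.
-/

open Set Topology

/-- `(x, F)` is admissible for the fiberwise lower powerspace of `p : A → X`
when `F` is a subset of the fiber `p⁻¹(x)` which is closed in the subspace
topology of that fiber. -/
def FibClosed {X A : Type*} [TopologicalSpace A] (p : A → X)
    (q : X × Set A) : Prop :=
  q.2 ⊆ p ⁻¹' {q.1} ∧
    IsClosed ((Subtype.val : ↥(p ⁻¹' {q.1}) → A) ⁻¹' q.2)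

/-- The fiberwise lower powerspace `𝓕_X(A)` of `p : A → X`: pairs `(x, F)`
with `x ∈ X` and `F` a closed subset of the fiber `A_x = p⁻¹(x)`. -/
def FLP {X A : Type*} [TopologicalSpace A] (p : A → X) : Type _ :=
  {q : X × Set A // FibClosed p q}

/-- The topology on the fiberwise lower powerspace, generated by the subbasic
open sets `{(x,F) : x ∈ U}` for open `U ⊆ X` and `◇_X S = {(x,F) : F ∩ S ≠ ∅}`
for open `S ⊆ A`. -/
def flpTopology {X A : Type*} [TopologicalSpace X] [TopologicalSpace A]
    (p : A → X) : TopologicalSpace (FLP p) :=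
  TopologicalSpace.generateFrom
    ({W | ∃ U : Set X, IsOpen U ∧ W = {q : FLP p | q.val.1 ∈ U}} ∪
     {W | ∃ S : Set A, IsOpen S ∧ W = {q : FLP p | (q.val.2 ∩ S).Nonempty}})

namespace Sierpinski

variable {α : Type*}

def basicOpen (t : Finset α) : Set (α → Prop) := {f | ∀ n ∈ t, f n}

lemma isOpen_setOf_apply (a : α) : IsOpen {g : α → Prop | g a} :=
  continuous_Prop.mp (continuous_apply a)

lemma isOpen_basicOpen (t : Finset α) : IsOpen (basicOpen t) := by
  simp only [basicOpen, ofPred_forall]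
  exact isOpen_biInter_finset fun n _ => isOpen_setOf_apply n

lemma basicOpen_union [DecidableEq α] (t t' : Finset α) :
    basicOpen (t ∪ t') = basicOpen t ∩ basicOpen t' := by
  ext f
  simp [basicOpen, or_imp, forall_and]

lemma basicOpen_anti {t t' : Finset α} (h : t ⊆ t') : basicOpen t' ⊆ basicOpen t :=
  fun _ hf n hn => hf n (h hn)

lemma eq_univ_of_isOpen_of_false_mem {u : Set Prop} (hu : IsOpen u) (h : False ∈ u) :
    u = univ :=
  Filter.mem_top.mp (nhds_false ▸ hu.mem_nhds h)

lemma exists_basicOpen_subset {W : Set (α → Prop)} (hW : IsOpen W) {f : α → Prop}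
    (hf : f ∈ W) : ∃ t : Finset α, f ∈ basicOpen t ∧ basicOpen t ⊆ W := by
  classical
  obtain ⟨I, u, hu, hIu⟩ := isOpen_pi_iff.mp hW f hf
  refine ⟨I.filter f, fun n hn => (Finset.mem_filter.mp hn).2, fun g hg => hIu fun a ha => ?_⟩
  by_cases hfa : f a
  · have hga : g a := hg a (Finset.mem_filter.mpr ⟨ha, hfa⟩)
    simpa [hfa, hga] using (hu a ha).2
  · simp [eq_univ_of_isOpen_of_false_mem (hu a ha).1 (by simpa [hfa] using (hu a ha).2)]

lemma isOpen_setOf_exists_and_apply (c : α → Prop) : IsOpen {g : α → Prop | ∃ a, c a ∧ g a} := by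
  simp only [ofPred_exists]
  exact isOpen_iUnion fun a => by by_cases ha : c a <;> simp [ha, isOpen_setOf_apply]

lemma exists_basicOpen_of_isInducing {Y : Type*} [TopologicalSpace Y] {ψ : Y → α → Prop}
    (hψ : IsInducing ψ) {S : Set Y} (hS : IsOpen S) {y : Y} (hy : y ∈ S) :
    ∃ t, ψ y ∈ basicOpen t ∧ ψ ⁻¹' basicOpen t ⊆ S := by
  obtain ⟨W, hW, rfl⟩ := hψ.isOpen_iff.1 hS
  obtain ⟨t, ht, htW⟩ := exists_basicOpen_subset hW hy
  exact ⟨t, ht, preimage_mono htW⟩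

lemma exists_generic {ι : Type*} [Countable ι] {v : Finset α → Prop}
    (hv : ∀ ⦃t t'⦄, t ⊆ t' → v t' → v t) {Trig Sat : ι → Finset α → Prop}
    (hTrig : ∀ i ⦃t t'⦄, t ⊆ t' → Trig i t → Trig i t')
    (hext : ∀ i t, v t → Trig i t → ∃ t', t ⊆ t' ∧ Sat i t' ∧ v t') {s : Finset α} (hs : v s) :
    ∃ f : α → Prop, f ∈ basicOpen s ∧ (∀ t, f ∈ basicOpen t → v t) ∧
      ∀ i t, f ∈ basicOpen t → Trig i t → ∃ t', f ∈ basicOpen t' ∧ Sat i t' := by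
  have := Encodable.ofCountable ι
  let D : ι → Order.Cofinal {t // v t} := fun i =>
    { carrier := {t | Sat i t.1 ∨ ∀ t', t ≤ t' → ¬Trig i t'.1}
      isCofinal := fun t => by
        by_cases h : ∃ t' : {t // v t}, t ≤ t' ∧ Trig i t'.1
        · obtain ⟨t', htt', htrig⟩ := h
          obtain ⟨u, hu, hsat, hvu⟩ := hext i t'.1 t'.2 htrig
          exact ⟨⟨u, hvu⟩, Or.inl hsat, htt'.trans hu⟩
        · simp only [not_exists, not_and] at h
          exact ⟨t, Or.inr h, le_rfl⟩ }
  let seq := Order.sequenceOfCofinals ⟨s, hs⟩ D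
  have hmono : Monotone seq := Order.sequenceOfCofinals.monotone _ _
  have hdir : Directed (· ⊆ ·) fun m => ((seq m).1 : Set α) :=
    Monotone.directed_le fun _ _ h => Finset.coe_subset.2 (hmono h)
  let f : α → Prop := fun n => ∃ m, n ∈ (seq m).1
  have hfin : ∀ t, f ∈ basicOpen t → ∃ m, t ⊆ (seq m).1 := fun t ht => by
    simpa using hdir.exists_mem_subset_of_finset_subset_biUnion (s := t) fun n hn =>
      mem_iUnion.2 (ht n hn)
  refine ⟨f, fun n hn => ⟨0, hn⟩, fun t ht => ?_, fun i t ht htrig => ?_⟩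
  · obtain ⟨m, hm⟩ := hfin t ht
    exact hv hm (seq m).2
  · obtain ⟨m, hm⟩ := hfin t ht
    set k := Encodable.encode i + 1
    refine ⟨(seq k).1, fun n hn => ⟨k, hn⟩, ?_⟩
    refine (Order.sequenceOfCofinals.encode_mem _ D i).resolve_right fun hno => ?_
    exact hno (seq (max m k)) (hmono (le_max_right _ _))
      (hTrig i (hm.trans (hmono (le_max_left _ _))) htrig)

end Sierpinski

section Pi02

variable {Y Z : Type*} [TopologicalSpace Y] [TopologicalSpace Z]

lemma isPi02_closed_union_open {C O : Set Y} (hC : IsClosed C) (hO : IsOpen O) :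
    IsPi02 (C ∪ O) :=
  ⟨fun _ => C, fun _ => O, fun _ => hC, fun _ => hO, (iInter_const _).symm⟩

lemma isPi02_setOf_imp {P Q : Y → Prop} (hP : IsOpen {y | P y}) (hQ : IsOpen {y | Q y}) :
    IsPi02 {y | P y → Q y} := by
  convert isPi02_closed_union_open hP.isClosed_compl hQ using 1
  ext y
  simp [imp_iff_not_or]

lemma IsPi02.iInter {ι : Sort*} [Countable ι] {s : ι → Set Y} (h : ∀ i, IsPi02 (s i)) :
    IsPi02 (⋂ i, s i) := by
  cases isEmpty_or_nonempty ι
  · simpa using isPi02_closed_union_open isClosed_univ isOpen_empty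
  obtain ⟨e, he⟩ := exists_surjective_nat ι
  choose C O hC hO hs using h
  refine ⟨fun k => C (e k.unpair.1) k.unpair.2, fun k => O (e k.unpair.1) k.unpair.2,
    fun k => hC _ _, fun k => hO _ _, ?_⟩
  ext y
  simp only [mem_iInter, hs]
  refine ⟨fun hy k => hy _ _, fun hy i n => ?_⟩
  obtain ⟨m, rfl⟩ := he i
  simpa using hy (Nat.pair m n)

lemma IsPi02.inter {s t : Set Y} (hs : IsPi02 s) (ht : IsPi02 t) : IsPi02 (s ∩ t) := by
  rw [inter_eq_iInter]
  exact IsPi02.iInter (Bool.forall_bool.mpr ⟨ht, hs⟩)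

lemma IsPi02.preimage {f : Y → Z} (hf : Continuous f) {s : Set Z} (hs : IsPi02 s) :
    IsPi02 (f ⁻¹' s) := by
  obtain ⟨C, O, hC, hO, rfl⟩ := hs
  exact ⟨fun n => f ⁻¹' C n, fun n => f ⁻¹' O n, fun n => (hC n).preimage hf,
    fun n => (hO n).preimage hf, by simp only [preimage_iInter, preimage_union]⟩

lemma IsPi02.image_homeomorph (e : Y ≃ₜ Z) {s : Set Y} (hs : IsPi02 s) : IsPi02 (e '' s) := by
  rw [e.image_eq_preimage_symm]
  exact hs.preimage e.symm.continuous

end Pi02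

lemma isQuasiPolish_iff_exists_isEmbedding {X : Type*} [TopologicalSpace X] :
    IsQuasiPolish X ↔ ∃ e : X → (ℕ → Prop), IsEmbedding e ∧ IsPi02 (range e) := by
  constructor
  · rintro ⟨S, hS, ⟨φ⟩⟩
    refine ⟨Subtype.val ∘ φ, IsEmbedding.subtypeVal.comp φ.isEmbedding, ?_⟩
    rwa [range_comp, φ.range_coe, image_univ, Subtype.range_coe]
  · rintro ⟨e, he, hr⟩
    exact ⟨range e, hr, ⟨he.toHomeomorph⟩⟩

lemma IsQuasiPolish.of_isEmbedding {X Y : Type*} [TopologicalSpace X] [TopologicalSpace Y]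
    (h : Y ≃ₜ (ℕ → Prop)) {e : X → Y} (he : IsEmbedding e) (hr : IsPi02 (range e)) :
    IsQuasiPolish X := by
  refine isQuasiPolish_iff_exists_isEmbedding.mpr ⟨h ∘ e, h.isEmbedding.comp he, ?_⟩
  rw [range_comp]
  exact hr.image_homeomorph h

noncomputable def sierpinskiProdHomeomorph : ((ℕ → Prop) × (Finset ℕ → Prop)) ≃ₜ (ℕ → Prop) :=
  letI : Denumerable (Finset ℕ) := Denumerable.ofEncodableOfInfinite _
  Homeomorph.sumArrowHomeomorphProdArrow.symm.trans
    (Homeomorph.piCongrLeft (Y := fun _ => Prop) (Denumerable.eqv (ℕ ⊕ Finset ℕ)))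

lemma FibClosed.mem_of_mem_closure {X A : Type*} [TopologicalSpace A] {p : A → X} {x : X}
    {F : Set A} (h : FibClosed p (x, F)) {a : A} (hpa : p a = x) (ha : a ∈ closure F) : a ∈ F := by
  obtain ⟨K, hK, hKF⟩ := isClosed_induced_iff.1 h.2
  have hFK : F ⊆ K := fun b hb => by
    have : (⟨b, h.1 hb⟩ : p ⁻¹' {x}) ∈ Subtype.val ⁻¹' K := by rw [hKF]; exact hb
    exact this
  have : (⟨a, hpa⟩ : p ⁻¹' {x}) ∈ Subtype.val ⁻¹' K := hK.closure_subset_iff.2 hFK ha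
  rw [hKF] at this
  exact this

instance {X A : Type*} [TopologicalSpace X] [TopologicalSpace A] (p : A → X) :
    TopologicalSpace (FLP p) :=
  flpTopology p

namespace FLP

open Sierpinski

variable {X A : Type*} (p : A → X) (φ : X → ℕ → Prop) (ψ : A → ℕ → Prop)

abbrev Code : Type := (ℕ → Prop) × (Finset ℕ → Prop)

def decode (q : Code) : Set A :=
  {a | φ (p a) = q.1 ∧ ∀ t, ψ a ∈ basicOpen t → q.2 t}

def Forces (t : Finset ℕ) (n : ℕ) : Prop :=
  ∀ a, ψ a ∈ basicOpen t → φ (p a) n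

/-- The conditions refer to a presentation `range ψ = ⋂ i, C i ∪ O i`; the last two are what is
needed to extend a condition `t` with `q.2 t` to a point of `range ψ` over `q.1`. -/
structure IsCode (C O : ℕ → Set (ℕ → Prop)) (q : Code) : Prop where
  fst_mem : q.1 ∈ range φ
  anti : ∀ ⦃t t'⦄, t ⊆ t' → q.2 t' → q.2 t
  fst_of_forces : ∀ t n, Forces p φ ψ t n → q.2 t → q.1 n
  extend_of_disjoint : ∀ t i, basicOpen t ⊆ (C i)ᶜ → q.2 t →
    ∃ t', (t ⊆ t' ∧ basicOpen t' ⊆ O i) ∧ q.2 t'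
  extend_forces : ∀ t n, q.2 t → q.1 n → ∃ t', (t ⊆ t' ∧ Forces p φ ψ t' n) ∧ q.2 t'

variable {p φ ψ} in
lemma isPi02_setOf_isCode (hφ : IsPi02 (range φ)) (C O : ℕ → Set (ℕ → Prop)) :
    IsPi02 {q : Code | IsCode p φ ψ C O q} := by
  have hsnd (t : Finset ℕ) : IsOpen {q : Code | q.2 t} :=
    (isOpen_setOf_apply t).preimage continuous_snd
  have hfst (n : ℕ) : IsOpen {q : Code | q.1 n} :=
    (isOpen_setOf_apply n).preimage continuous_fst
  have hext (c : Finset ℕ → Prop) :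
      IsOpen {q : Code | ∃ t, c t ∧ q.2 t} :=
    (isOpen_setOf_exists_and_apply c).preimage continuous_snd
  have : {q : Code | IsCode p φ ψ C O q} = Prod.fst ⁻¹' range φ ∩
      ((⋂ (t) (t') (_ : t ⊆ t'), {q : Code | q.2 t' → q.2 t}) ∩
      ((⋂ (t) (n) (_ : Forces p φ ψ t n), {q : Code | q.2 t → q.1 n}) ∩
      ((⋂ (t) (i) (_ : basicOpen t ⊆ (C i)ᶜ),
          {q : Code | q.2 t → ∃ t', (t ⊆ t' ∧ basicOpen t' ⊆ O i) ∧ q.2 t'}) ∩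
      (⋂ (t) (n),
          {q : Code | q.2 t ∧ q.1 n → ∃ t', (t ⊆ t' ∧ Forces p φ ψ t' n) ∧ q.2 t'})))) := by
    ext q
    simp only [mem_ofPred_eq, mem_inter_iff, mem_iInter, mem_preimage, and_imp]
    exact ⟨fun h => ⟨h.1, h.2, h.3, h.4, h.5⟩,
      fun h => ⟨h.1, h.2.1, h.2.2.1, h.2.2.2.1, h.2.2.2.2⟩⟩
  rw [this]
  refine (hφ.preimage continuous_fst).inter (.inter ?_ (.inter ?_ (.inter ?_ ?_))) <;>
    refine .iInter fun t => .iInter fun k => ?_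
  · exact .iInter fun _ => isPi02_setOf_imp (hsnd k) (hsnd t)
  · exact .iInter fun _ => isPi02_setOf_imp (hsnd t) (hfst k)
  · exact .iInter fun _ => isPi02_setOf_imp (hsnd t) (hext _)
  · exact isPi02_setOf_imp ((hsnd t).inter (hfst k)) (hext _)

variable [TopologicalSpace A]

def encode (z : FLP p) : Code :=
  (φ z.1.1, fun t => (z.1.2 ∩ ψ ⁻¹' basicOpen t).Nonempty)

variable {p φ ψ} in
lemma decode_encode (hφ : Function.Injective φ) (hψ : IsInducing ψ) (z : FLP p) :
    decode p φ ψ (encode p φ ψ z) = z.1.2 := by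
  obtain ⟨⟨x, F⟩, hz⟩ := z
  ext a
  refine ⟨fun ⟨hpa, hmem⟩ => hz.mem_of_mem_closure (hφ hpa) ?_,
    fun haF => ⟨?_, fun t ht => ⟨a, haF, ht⟩⟩⟩
  · refine mem_closure_iff.2 fun S hS haS => ?_
    obtain ⟨t, hat, htS⟩ := exists_basicOpen_of_isInducing hψ hS haS
    obtain ⟨b, hbF, hbt⟩ := hmem t hat
    exact ⟨b, htS hbt, hbF⟩
  · show φ (p a) = φ x
    rw [show p a = x from hz.1 haF]

variable [TopologicalSpace X] {p φ ψ}

lemma continuous_val_fst : Continuous fun z : FLP p => z.1.1 :=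
  continuous_def.2 fun U hU => TopologicalSpace.isOpen_generateFrom_of_mem (Or.inl ⟨U, hU, rfl⟩)

lemma isOpen_setOf_inter_nonempty {S : Set A} (hS : IsOpen S) :
    IsOpen {z : FLP p | (z.1.2 ∩ S).Nonempty} :=
  TopologicalSpace.isOpen_generateFrom_of_mem (Or.inr ⟨S, hS, rfl⟩)

lemma exists_forces (hφ : Continuous φ) (hp : Continuous p) (hψ : IsInducing ψ) {a : A} {n : ℕ}
    (h : φ (p a) n) : ∃ t, ψ a ∈ basicOpen t ∧ Forces p φ ψ t n := by
  obtain ⟨t, hat, ht⟩ := exists_basicOpen_of_isInducing hψ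
    ((isOpen_setOf_apply n).preimage (hφ.comp hp)) (show a ∈ {a | φ (p a) n} from h)
  exact ⟨t, hat, fun b hb => ht hb⟩

lemma encode_isCode (hφ : Continuous φ) (hp : Continuous p) (hψ : IsInducing ψ)
    {C O : ℕ → Set (ℕ → Prop)} (hψr : range ψ ⊆ ⋂ i, C i ∪ O i) (hO : ∀ i, IsOpen (O i))
    (z : FLP p) : IsCode p φ ψ C O (encode p φ ψ z) := by
  obtain ⟨⟨x, F⟩, hF, -⟩ := z
  have hpF {a : A} (ha : a ∈ F) : p a = x := hF ha
  refine ⟨mem_range_self x, fun t t' htt' ⟨a, haF, ha⟩ => ⟨a, haF, basicOpen_anti htt' ha⟩,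
    fun t n hforce ⟨a, haF, ha⟩ => hpF haF ▸ hforce a ha, ?_, ?_⟩
  · rintro t i hti ⟨a, haF, ha⟩
    have haO : ψ a ∈ O i := (mem_iInter.1 (hψr (mem_range_self a)) i).resolve_left (hti ha)
    obtain ⟨w, haw, hwO⟩ := exists_basicOpen_subset (hO i) haO
    refine ⟨t ∪ w, ⟨Finset.subset_union_left,
      (basicOpen_anti Finset.subset_union_right).trans hwO⟩, a, haF, ?_⟩
    classical
    exact (basicOpen_union t w).symm ▸ ⟨ha, haw⟩
  · rintro t n ⟨a, haF, ha⟩ hxn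
    obtain ⟨w, haw, hforce⟩ := exists_forces hφ hp hψ (a := a) (n := n) (hpF haF ▸ hxn)
    refine ⟨t ∪ w, ⟨Finset.subset_union_left,
      fun b hb => hforce b (basicOpen_anti Finset.subset_union_right hb)⟩, a, haF, ?_⟩
    classical
    exact (basicOpen_union t w).symm ▸ ⟨ha, haw⟩

lemma exists_mem_decode (hφ : Continuous φ) (hp : Continuous p) (hψ : IsInducing ψ)
    {C O : ℕ → Set (ℕ → Prop)} (hψr : ⋂ i, C i ∪ O i ⊆ range ψ) (hC : ∀ i, IsClosed (C i))
    {q : Code} (hq : IsCode p φ ψ C O q) {s : Finset ℕ} (hs : q.2 s) :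
    ∃ a ∈ decode p φ ψ q, ψ a ∈ basicOpen s := by
  obtain ⟨f, hfs, hfq, hreq⟩ := exists_generic (ι := ℕ ⊕ ℕ) hq.anti
    (Trig := Sum.elim (fun i t => basicOpen t ⊆ (C i)ᶜ) fun n _ => q.1 n)
    (Sat := Sum.elim (fun i t => basicOpen t ⊆ O i) fun n t => Forces p φ ψ t n)
    (by rintro (i | n) t t' htt' htrig; exacts [(basicOpen_anti htt').trans htrig, htrig])
    (by
      rintro (i | n) t hqt htrig <;> simp only [Sum.elim_inl, Sum.elim_inr, ← and_assoc]
      exacts [hq.extend_of_disjoint t i htrig hqt, hq.extend_forces t n hqt htrig])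
    hs
  have hfA : f ∈ ⋂ i, C i ∪ O i := mem_iInter.2 fun i => or_iff_not_imp_left.2 fun hfC => by
    obtain ⟨t, hft, htC⟩ := exists_basicOpen_subset (hC i).isOpen_compl hfC
    obtain ⟨t', hft', htO⟩ := hreq (.inl i) t hft htC
    exact htO hft'
  obtain ⟨a, rfl⟩ := hψr hfA
  refine ⟨a, ⟨funext fun n => propext ⟨fun h => ?_, fun h => ?_⟩, hfq⟩, hfs⟩
  · obtain ⟨t, hat, hforce⟩ := exists_forces hφ hp hψ h
    exact hq.fst_of_forces t n hforce (hfq t hat)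
  · obtain ⟨t, hat, hforce⟩ := hreq (.inr n) ∅ (fun _ h => absurd h (Finset.notMem_empty _)) h
    exact hforce a hat

lemma range_encode (hφ : IsEmbedding φ) (hp : Continuous p) (hψ : IsInducing ψ)
    {C O : ℕ → Set (ℕ → Prop)} (hψr : range ψ = ⋂ i, C i ∪ O i) (hC : ∀ i, IsClosed (C i))
    (hO : ∀ i, IsOpen (O i)) : range (encode p φ ψ) = {q | IsCode p φ ψ C O q} := by
  refine Subset.antisymm (range_subset_iff.2 <| encode_isCode hφ.continuous hp hψ hψr.subset hO)
    fun q hq => ?_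
  obtain ⟨x, hx⟩ := hq.fst_mem
  have hfib : FibClosed p (x, decode p φ ψ q) := by
    refine ⟨fun a ha => hφ.injective (ha.1.trans hx.symm), isClosed_induced_iff.2
      ⟨{a | ∀ t, ψ a ∈ basicOpen t → q.2 t}, ?_, ?_⟩⟩
    · simp only [ofPred_forall]
      exact isClosed_iInter fun t => isClosed_imp
        ((isOpen_basicOpen t).preimage hψ.continuous) isClosed_const
    · ext ⟨a, ha⟩
      have hpa : p a = x := ha
      simp [decode, hpa, hx]
  refine ⟨⟨(x, decode p φ ψ q), hfib⟩, Prod.ext hx (funext fun s => propext ⟨?_, fun hs => ?_⟩)⟩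
  · rintro ⟨a, ha, has⟩
    exact ha.2 s has
  · exact exists_mem_decode hφ.continuous hp hψ hψr.superset hC hq hs

lemma isEmbedding_encode (hφ : IsEmbedding φ) (hψ : IsInducing ψ) :
    IsEmbedding (encode p φ ψ) := by
  refine ⟨(isInducing_iff _).2 <|
    le_antisymm (continuous_iff_le_induced.1 ?_) (le_generateFrom ?_), fun z z' h => ?_⟩
  · exact (hφ.continuous.comp continuous_val_fst).prodMk <| continuous_pi fun t =>
      continuous_Prop.2 <| isOpen_setOf_inter_nonempty <|
        (isOpen_basicOpen t).preimage hψ.continuous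
  · rintro _ (⟨U, hU, rfl⟩ | ⟨S, hS, rfl⟩)
    · obtain ⟨V, hV, rfl⟩ := hφ.isOpen_iff.1 hU
      exact isOpen_induced_iff.2 ⟨Prod.fst ⁻¹' V, hV.preimage continuous_fst, rfl⟩
    · refine isOpen_induced_iff.2 ⟨Prod.snd ⁻¹' {g | ∃ t, ψ ⁻¹' basicOpen t ⊆ S ∧ g t},
        (isOpen_setOf_exists_and_apply _).preimage continuous_snd, ?_⟩
      ext z
      refine ⟨fun ⟨t, htS, a, haF, hat⟩ => ⟨a, haF, htS hat⟩, fun ⟨a, haF, haS⟩ => ?_⟩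
      obtain ⟨t, hat, htS⟩ := exists_basicOpen_of_isInducing hψ hS haS
      exact ⟨t, htS, a, haF, hat⟩
  · refine Subtype.ext (Prod.ext (hφ.injective (congrArg Prod.fst h)) ?_)
    rw [← decode_encode hφ.injective hψ z, ← decode_encode hφ.injective hψ z', h]

end FLP

/-- The fiberwise lower powerspace of a continuous map between quasi-Polish
spaces is quasi-Polish. -/
theorem flp_quasiPolish {X A : Type*} [TopologicalSpace X] [TopologicalSpace A]
    (hX : IsQuasiPolish X) (hA : IsQuasiPolish A)
    (p : A → X) (hp : Continuous p) :
    @IsQuasiPolish (FLP p) (flpTopology p) := by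
  obtain ⟨φ, hφ, hφr⟩ := isQuasiPolish_iff_exists_isEmbedding.1 hX
  obtain ⟨ψ, hψ, C, O, hC, hO, hψr⟩ := isQuasiPolish_iff_exists_isEmbedding.1 hA
  refine IsQuasiPolish.of_isEmbedding sierpinskiProdHomeomorph
    (FLP.isEmbedding_encode hφ hψ.isInducing) ?_
  rw [FLP.range_encode hφ hp hψ.isInducing hψr hC hO]
  exact FLP.isPi02_setOf_isCode hφr C O
end
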